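/- arXiv:2006.12957 — 4 statements merged into one kernel-verified Lean document; each statement's English description precedes it below -/
import Mathlib

section
/- If λ < 0, then the zero solution is stable: for every ε ∈ (0,d0] there exist δ > 0 and t1 ≥ t0 such that every admissible solution with v(t1) ≤ δ satisfies 0 ≤ v(t) ≤ ε for all t ≥ t1. Moreover, there exist δ > 0, t1 ≥ t0 and c > 0 such that every admissible solution with v(t1) ≤ δ satisfies: if n < q, then v(t) ≤ v(t1)·exp(−c·(t^{1−n/q} − t1^{1−n/q})) for all t ≥ t1 (exponential stability); if n = q, then v(t) ≤ v(t1)·(t/t1)^{−c} for all t ≥ t1 (polynomial stability). -/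
/-- An admissible solution of the reduced equation
`v'(t) = λ·t^{−n/q}·v(t) + ρ(t)` on `[t0,∞)` with values in `[0,d0]`,
where `|ρ(t)| ≤ M·t^{−n/q}·v(t)·(v(t) + t^{−1/q})`. -/
def IsAdmissibleLin (q n : ℕ) (lam d0 t0 M : ℝ) (v : ℝ → ℝ) : Prop :=
  (∀ t ≥ t0, v t ∈ Set.Icc (0:ℝ) d0) ∧
  ∃ ρ : ℝ → ℝ,
    (∀ t ≥ t0, |ρ t| ≤ M * t ^ (-(n:ℝ)/(q:ℝ)) * v t * (v t + t ^ (-(1:ℝ)/(q:ℝ)))) ∧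
    (∀ t ≥ t0, HasDerivAt v (lam * t ^ (-(n:ℝ)/(q:ℝ)) * v t + ρ t) t)

/-!
Take `t1` so large that `M t^{-1/q} ≤ -λ/4` for `t ≥ t1`, and `δ = -λ/(4M)`. As long as
`v ≤ δ` the perturbation is at most `-(λ/2) t^{-n/q} v`, so `v' ≤ (λ/2) t^{-n/q} v`; in
particular `v' < 0` on the level `v = δ`, which makes `{v ≤ δ}` forward invariant. Grönwall's
inequality with a primitive of `(λ/2) t^{-n/q}`, a multiple of `t^{1-n/q}` when `n < q` and of
`log t` when `n = q`, then gives exponential, resp. polynomial, decay.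
-/

open Set Filter Real Topology

section Trapping

variable {lam M : ℝ}

lemma linear_add_le_half_of_abs_le {τ v s ρ : ℝ} (hτ : 0 ≤ τ) (hv : 0 ≤ v)
    (hMv : M * v ≤ -lam / 4) (hMs : M * s ≤ -lam / 4) (hρ : |ρ| ≤ M * τ * v * (v + s)) :
    lam * τ * v + ρ ≤ lam / 2 * τ * v :=
  calc lam * τ * v + ρ ≤ lam * τ * v + τ * v * (M * v + M * s) := by
        linarith [le_of_abs_le hρ]
    _ ≤ lam * τ * v + τ * v * (-lam / 2) := by
        gcongr
        linarith
    _ = lam / 2 * τ * v := by ring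

variable {τ s v ρ : ℝ → ℝ} {t1 δ : ℝ}

/-- At the level `δ` the linear part dominates the perturbation, so `v` cannot cross it. -/
lemma forall_le_of_hasDerivAt_linear_add (hlam : lam < 0) (hτ : ∀ t ≥ t1, 0 < τ t)
    (hs : ∀ t ≥ t1, M * s t ≤ -lam / 4) (hρ : ∀ t ≥ t1, |ρ t| ≤ M * τ t * v t * (v t + s t))
    (hv : ∀ t ≥ t1, HasDerivAt v (lam * τ t * v t + ρ t) t)
    (hδ : 0 < δ) (hMδ : M * δ ≤ -lam / 4) (h1 : v t1 ≤ δ) : ∀ t ≥ t1, v t ≤ δ := by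
  intro t ht
  refine image_le_of_deriv_right_lt_deriv_boundary (B := fun _ ↦ δ) (B' := fun _ ↦ 0)
    (fun x hx ↦ (hv x hx.1).continuousAt.continuousWithinAt)
    (fun x hx ↦ (hv x hx.1).hasDerivWithinAt) h1 (fun _ ↦ hasDerivAt_const _ _)
    (fun x hx hvx ↦ ?_) (right_mem_Icc.2 ht)
  have hτx := hτ x hx.1
  calc lam * τ x * v x + ρ x ≤ lam / 2 * τ x * v x :=
        linear_add_le_half_of_abs_le hτx.le (hvx ▸ hδ.le) (hvx ▸ hMδ) (hs x hx.1) (hρ x hx.1)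
    _ < 0 := by
        rw [hvx]
        exact mul_neg_of_neg_of_pos (mul_neg_of_neg_of_pos (by linarith) hτx) hδ

end Trapping

/-- Grönwall: `v * exp (-G)` is antitone. -/
lemma le_mul_exp_sub_of_hasDerivAt_le {v D G g : ℝ → ℝ} {t1 : ℝ}
    (hv : ∀ t ≥ t1, HasDerivAt v (D t) t) (hG : ∀ t ≥ t1, HasDerivAt G (g t) t)
    (hD : ∀ t ≥ t1, D t ≤ g t * v t) : ∀ t ≥ t1, v t ≤ v t1 * exp (G t - G t1) := by
  have hw : ∀ t ≥ t1, HasDerivAt (fun x ↦ v x * exp (-G x))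
      (D t * exp (-G t) + v t * (exp (-G t) * -g t)) t :=
    fun t ht ↦ (hv t ht).mul (hG t ht).neg.exp
  have hanti : AntitoneOn (fun x ↦ v x * exp (-G x)) (Ici t1) := by
    refine antitoneOn_of_hasDerivWithinAt_nonpos (convex_Ici t1)
      (fun x hx ↦ (hw x hx).continuousAt.continuousWithinAt)
      (fun x hx ↦ (hw x (interior_subset hx)).hasDerivWithinAt) (fun x hx ↦ ?_)
    have hx : t1 ≤ x := interior_subset hx
    nlinarith [hD x hx, exp_pos (-G x)]
  intro t ht
  calc v t = v t * exp (-G t) * exp (G t) := by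
        rw [mul_assoc, ← exp_add, neg_add_cancel, exp_zero, mul_one]
    _ ≤ v t1 * exp (-G t1) * exp (G t) :=
        mul_le_mul_of_nonneg_right (hanti self_mem_Ici ht ht) (exp_pos _).le
    _ = v t1 * exp (G t - G t1) := by rw [mul_assoc, ← exp_add, neg_add_eq_sub]

lemma exists_forall_ge_mul_rpow_neg_inv_le {q : ℕ} (hq : 0 < q) (M t0 : ℝ) {ε : ℝ}
    (hε : 0 < ε) : ∃ t1 ≥ t0, ∀ t ≥ t1, M * t ^ (-(1:ℝ) / q) ≤ ε := by
  have hlim : Tendsto (fun t : ℝ ↦ M * t ^ (-(1:ℝ) / q)) atTop (𝓝 0) := by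
    simpa [neg_div] using (tendsto_rpow_neg_atTop (by positivity : (0:ℝ) < 1 / q)).const_mul M
  obtain ⟨t1, ht1⟩ := eventually_atTop.1 (hlim.eventually_le_const hε)
  exact ⟨max t0 t1, le_max_left _ _, fun t ht ↦ ht1 t ((le_max_right _ _).trans ht)⟩

lemma one_sub_div_pos_of_lt {n q : ℕ} (hnq : n < q) : 0 < 1 - (n:ℝ) / q := by
  rw [sub_pos, div_lt_one (by exact_mod_cast n.zero_le.trans_lt hnq)]
  exact_mod_cast hnq

namespace IsAdmissibleLin

variable {q n : ℕ} {lam d0 t0 M : ℝ} {v : ℝ → ℝ} {t1 δ : ℝ}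

lemma forall_le (hv : IsAdmissibleLin q n lam d0 t0 M v) (hlam : lam < 0) (ht0 : 0 < t0)
    (ht1 : t0 ≤ t1) (hs : ∀ t ≥ t1, M * t ^ (-(1:ℝ) / q) ≤ -lam / 4) (hδ : 0 < δ)
    (hMδ : M * δ ≤ -lam / 4) (h1 : v t1 ≤ δ) : ∀ t ≥ t1, v t ≤ δ := by
  obtain ⟨-, ρ, hρ, hder⟩ := hv
  exact forall_le_of_hasDerivAt_linear_add hlam
    (fun t ht ↦ rpow_pos_of_pos (ht0.trans_le (ht1.trans ht)) _) hs
    (fun t ht ↦ hρ t (ht1.trans ht)) (fun t ht ↦ hder t (ht1.trans ht)) hδ hMδ h1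

lemma le_mul_exp_sub (hv : IsAdmissibleLin q n lam d0 t0 M v) (hlam : lam < 0) (hM : 0 ≤ M)
    (ht0 : 0 < t0) (ht1 : t0 ≤ t1) (hs : ∀ t ≥ t1, M * t ^ (-(1:ℝ) / q) ≤ -lam / 4)
    (hδ : 0 < δ) (hMδ : M * δ ≤ -lam / 4) (h1 : v t1 ≤ δ) {G : ℝ → ℝ}
    (hG : ∀ t ≥ t1, HasDerivAt G (lam / 2 * t ^ (-(n:ℝ) / q)) t) :
    ∀ t ≥ t1, v t ≤ v t1 * exp (G t - G t1) := by
  have hle := hv.forall_le hlam ht0 ht1 hs hδ hMδ h1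
  obtain ⟨hmem, ρ, hρ, hder⟩ := hv
  refine le_mul_exp_sub_of_hasDerivAt_le (fun t ht ↦ hder t (ht1.trans ht)) hG fun t ht ↦ ?_
  have ht0t := ht1.trans ht
  exact linear_add_le_half_of_abs_le (rpow_pos_of_pos (ht0.trans_le ht0t) _).le (hmem t ht0t).1
    ((mul_le_mul_of_nonneg_left (hle t ht) hM).trans hMδ) (hs t ht) (hρ t ht0t)

lemma le_mul_exp_neg_rpow (hv : IsAdmissibleLin q n lam d0 t0 M v) (hnq : n < q)
    (hlam : lam < 0) (hM : 0 ≤ M) (ht0 : 0 < t0) (ht1 : t0 ≤ t1)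
    (hs : ∀ t ≥ t1, M * t ^ (-(1:ℝ) / q) ≤ -lam / 4) (hδ : 0 < δ) (hMδ : M * δ ≤ -lam / 4)
    (h1 : v t1 ≤ δ) :
    ∀ t ≥ t1, v t ≤ v t1 * exp (-(-lam / (2 * (1 - n / q)) * (t ^ (1 - (n:ℝ) / q) -
      t1 ^ (1 - (n:ℝ) / q)))) := by
  set α : ℝ := 1 - n / q
  have hα : α ≠ 0 := (one_sub_div_pos_of_lt hnq).ne'
  have hG : ∀ t ≥ t1,
      HasDerivAt (fun x ↦ lam / (2 * α) * x ^ α) (lam / 2 * t ^ (-(n:ℝ) / q)) t := by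
    intro t ht
    refine ((hasDerivAt_rpow_const (Or.inl (ht0.trans_le (ht1.trans ht)).ne')).const_mul
      (lam / (2 * α))).congr_deriv ?_
    rw [show α - 1 = -(n:ℝ) / q by simp only [α]; ring]
    field_simp
  intro t ht
  convert hv.le_mul_exp_sub hlam hM ht0 ht1 hs hδ hMδ h1 hG t ht using 3
  ring

lemma le_mul_div_rpow (hv : IsAdmissibleLin q q lam d0 t0 M v) (hq : 0 < q)
    (hlam : lam < 0) (hM : 0 ≤ M) (ht0 : 0 < t0) (ht1 : t0 ≤ t1)
    (hs : ∀ t ≥ t1, M * t ^ (-(1:ℝ) / q) ≤ -lam / 4) (hδ : 0 < δ) (hMδ : M * δ ≤ -lam / 4)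
    (h1 : v t1 ≤ δ) : ∀ t ≥ t1, v t ≤ v t1 * (t / t1) ^ (-(-lam / 2)) := by
  have hpos : ∀ t ≥ t1, 0 < t := fun t ht ↦ ht0.trans_le (ht1.trans ht)
  have hG : ∀ t ≥ t1, HasDerivAt (fun x ↦ lam / 2 * log x) (lam / 2 * t ^ (-(q:ℝ) / q)) t := by
    intro t ht
    rw [neg_div, div_self (by exact_mod_cast hq.ne'), rpow_neg_one]
    exact (hasDerivAt_log (hpos t ht).ne').const_mul _
  intro t ht
  rw [rpow_def_of_pos (div_pos (hpos t ht) (hpos t1 le_rfl)),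
    log_div (hpos t ht).ne' (hpos t1 le_rfl).ne']
  convert hv.le_mul_exp_sub hlam hM ht0 ht1 hs hδ hMδ h1 hG t ht using 3
  ring

end IsAdmissibleLin

theorem stability_of_zero_linear_case_general
    (q n : ℕ) (hq : 0 < q)
    (lam d0 t0 M : ℝ) (hlam : lam < 0) (ht0 : 0 < t0) (hM : 0 < M) :
    (∀ ε ∈ Set.Ioc (0:ℝ) d0, ∃ δ > 0, ∃ t1 ≥ t0,
      ∀ v : ℝ → ℝ, IsAdmissibleLin q n lam d0 t0 M v → v t1 ≤ δ →
        ∀ t ≥ t1, 0 ≤ v t ∧ v t ≤ ε) ∧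
    (∃ δ > 0, ∃ t1 ≥ t0, ∃ c > 0,
      ∀ v : ℝ → ℝ, IsAdmissibleLin q n lam d0 t0 M v → v t1 ≤ δ →
        ((n < q → ∀ t ≥ t1,
            v t ≤ v t1 *
              Real.exp (-(c * (t ^ (1 - (n:ℝ)/(q:ℝ)) - t1 ^ (1 - (n:ℝ)/(q:ℝ)))))) ∧
         (n = q → ∀ t ≥ t1, v t ≤ v t1 * (t / t1) ^ (-c)))) := by
  obtain ⟨t1, ht1, hs⟩ :=
    exists_forall_ge_mul_rpow_neg_inv_le hq M t0 (by linarith : 0 < -lam / 4)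
  have hδ : 0 < -lam / (4 * M) := div_pos (by linarith) (by linarith)
  have hMδ : M * (-lam / (4 * M)) = -lam / 4 := by field_simp
  refine ⟨fun ε hε ↦ ⟨min ε (-lam / (4 * M)), lt_min hε.1 hδ, t1, ht1, fun v hv h1 t ht ↦ ?_⟩,
    -lam / (4 * M), hδ, t1, ht1, ?_⟩
  · have hMε : M * min ε (-lam / (4 * M)) ≤ -lam / 4 :=
      (mul_le_mul_of_nonneg_left (min_le_right _ _) hM.le).trans hMδ.le
    exact ⟨(hv.1 t (ht1.trans ht)).1, (hv.forall_le hlam ht0 ht1 hs (lt_min hε.1 hδ) hMε h1 t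
      ht).trans (min_le_left _ _)⟩
  rcases lt_trichotomy n q with hnq | rfl | hnq
  · have hc : 0 < -lam / (2 * (1 - n / q)) :=
      div_pos (by linarith) (by linarith [one_sub_div_pos_of_lt hnq])
    exact ⟨_, hc, fun v hv h1 ↦ ⟨fun _ ↦
      hv.le_mul_exp_neg_rpow hnq hlam hM.le ht0 ht1 hs hδ hMδ.le h1, by omega⟩⟩
  · exact ⟨-lam / 2, by linarith, fun v hv h1 ↦ ⟨by omega, fun _ ↦
      hv.le_mul_div_rpow hq hlam hM.le ht0 ht1 hs hδ hMδ.le h1⟩⟩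
  · exact ⟨1, one_pos, fun _ _ _ ↦ ⟨by omega, by omega⟩⟩

/-- if `λ < 0` the zero solution is stable; moreover it is
exponentially stable when `n < q` and polynomially stable when `n = q`. -/
theorem stability_of_zero_linear_case
    (q n : ℕ) (hq : 0 < q) (hn : 0 < n)
    (lam d0 t0 M : ℝ) (hlam : lam < 0) (hd0 : 0 < d0) (ht0 : 0 < t0) (hM : 0 < M) :
    (∀ ε ∈ Set.Ioc (0:ℝ) d0, ∃ δ > 0, ∃ t1 ≥ t0,
      ∀ v : ℝ → ℝ, IsAdmissibleLin q n lam d0 t0 M v → v t1 ≤ δ →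
        ∀ t ≥ t1, 0 ≤ v t ∧ v t ≤ ε) ∧
    (∃ δ > 0, ∃ t1 ≥ t0, ∃ c > 0,
      ∀ v : ℝ → ℝ, IsAdmissibleLin q n lam d0 t0 M v → v t1 ≤ δ →
        ((n < q → ∀ t ≥ t1,
            v t ≤ v t1 *
              Real.exp (-(c * (t ^ (1 - (n:ℝ)/(q:ℝ)) - t1 ^ (1 - (n:ℝ)/(q:ℝ)))))) ∧
         (n = q → ∀ t ≥ t1, v t ≤ v t1 * (t / t1) ^ (-c)))) :=
  stability_of_zero_linear_case_general q n hq lam d0 t0 M hlam ht0 hM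
end

section
/- If λ > 0 and n ≤ q, then the zero solution is unstable: there exist ε > 0 and t1 ≥ t0 such that for every δ ∈ (0,ε), every admissible solution with v(t1) = δ satisfies v(t) ≥ ε for some t ≥ t1. -/
open Real Set

lemma monotoneOn_Ici_of_hasDerivAt_nonneg {f f' : ℝ → ℝ} {a : ℝ}
    (hf : ∀ t ≥ a, HasDerivAt f (f' t) t) (hf' : ∀ t ≥ a, 0 ≤ f' t) :
    MonotoneOn f (Ici a) :=
  monotoneOn_of_hasDerivWithinAt_nonneg (convex_Ici a)
    (fun t ht => (hf t ht).continuousAt.continuousWithinAt)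
    (fun t ht => (hf t (interior_subset ht)).hasDerivWithinAt)
    (fun t ht => hf' t (interior_subset ht))

lemma add_mul_log_div_le_of_div_le_deriv {v v' : ℝ → ℝ} {a c : ℝ} (ha : 0 < a)
    (hv : ∀ t ≥ a, HasDerivAt v (v' t) t) (hv' : ∀ t ≥ a, c / t ≤ v' t)
    {t : ℝ} (ht : a ≤ t) :
    v a + c * log (t / a) ≤ v t := by
  have hmono : MonotoneOn (fun s => v s - c * log s) (Ici a) :=
    monotoneOn_Ici_of_hasDerivAt_nonneg
      (fun s hs => (hv s hs).sub ((hasDerivAt_log (ha.trans_le hs).ne').const_mul c))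
      (fun s hs => by rw [sub_nonneg, ← div_eq_mul_inv]; exact hv' s hs)
  have hat := hmono self_mem_Ici ht ht
  rw [log_div (ha.trans_le ht).ne' ha.ne']
  simp only at hat
  linarith

lemma exists_le_of_mul_div_le_deriv {v v' : ℝ → ℝ} {a c : ℝ} (ha : 0 < a) (hc : 0 < c)
    (hva : 0 < v a) (hv0 : ∀ t ≥ a, 0 ≤ v t)
    (hv : ∀ t ≥ a, HasDerivAt v (v' t) t) (hv' : ∀ t ≥ a, c * v t / t ≤ v' t) (ε : ℝ) :
    ∃ t ≥ a, ε ≤ v t := by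
  have hmono : MonotoneOn v (Ici a) := monotoneOn_Ici_of_hasDerivAt_nonneg hv fun t ht =>
    (div_nonneg (mul_nonneg hc.le (hv0 t ht)) (ha.trans_le ht).le).trans (hv' t ht)
  have hv'a : ∀ t ≥ a, c * v a / t ≤ v' t := fun t ht =>
    (div_le_div_of_nonneg_right (mul_le_mul_of_nonneg_left (hmono self_mem_Ici ht ht) hc.le)
      (ha.trans_le ht).le).trans (hv' t ht)
  have hcva : 0 < c * v a := mul_pos hc hva
  have haT : a ≤ a * exp (|ε| / (c * v a)) :=
    le_mul_of_one_le_right ha.le (one_le_exp (by positivity))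
  refine ⟨_, haT, ?_⟩
  have hlog := add_mul_log_div_le_of_div_le_deriv ha hv hv'a haT
  rw [mul_div_cancel_left₀ _ ha.ne', log_exp, mul_div_cancel₀ _ hcva.ne'] at hlog
  linarith [le_abs_self ε]

lemma rpow_neg_one_div_le {q a t : ℝ} (hq : 0 < q) (ha : 0 < a) (ht : a⁻¹ ^ q ≤ t) :
    t ^ (-1 / q) ≤ a := by
  calc t ^ (-1 / q) ≤ (a⁻¹ ^ q) ^ (-1 / q) :=
        rpow_le_rpow_of_nonpos (by positivity) ht
          (div_nonpos_of_nonpos_of_nonneg (by norm_num) hq.le)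
    _ = a := by
        rw [← rpow_mul (inv_pos.2 ha).le, mul_div_cancel₀ _ hq.ne', rpow_neg_one, inv_inv]

lemma inv_le_rpow_neg_div {n q t : ℝ} (hq : 0 < q) (hnq : n ≤ q) (ht : 1 ≤ t) :
    t⁻¹ ≤ t ^ (-n / q) := by
  rw [← rpow_neg_one]
  refine rpow_le_rpow_of_exponent_le ht ?_
  rw [neg_div, neg_le_neg_iff]
  exact div_le_one_of_le₀ hnq hq.le

lemma half_mul_le_add_of_abs_le {lam M s v r ρ : ℝ} (hs : 0 ≤ s) (hv : 0 ≤ v)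
    (hsmall : 2 * M * (v + r) ≤ lam) (hρ : |ρ| ≤ M * s * v * (v + r)) :
    lam / 2 * s * v ≤ lam * s * v + ρ := by
  nlinarith [neg_abs_le ρ, mul_le_mul_of_nonneg_left hsmall (mul_nonneg hs hv)]

theorem instability_of_zero_linear_case_general
    (q n : ℕ) (hq : 0 < q) (hnq : n ≤ q)
    (lam d0 t0 M : ℝ) (hlam : 0 < lam) (hM : 0 < M) :
    ∃ ε > 0, ∃ t1 ≥ t0, ∀ δ ∈ Set.Ioo (0:ℝ) ε,
      ∀ v : ℝ → ℝ, IsAdmissibleLin q n lam d0 t0 M v → v t1 = δ →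
        ∃ t ≥ t1, ε ≤ v t := by
  have hqR : (0:ℝ) < q := Nat.cast_pos.2 hq
  set ε := lam / (4 * M)
  have hε : 0 < ε := by positivity
  set t1 := max (max t0 1) (ε⁻¹ ^ (q:ℝ))
  have ht0 : t0 ≤ t1 := le_max_of_le_left (le_max_left _ _)
  have ht1 : 1 ≤ t1 := le_max_of_le_left (le_max_right _ _)
  refine ⟨ε, hε, t1, ht0, ?_⟩
  rintro _ ⟨hv1, -⟩ v ⟨hrange, ρ, hρ, hderiv⟩ rfl
  by_contra! hlt
  refine (exists_le_of_mul_div_le_deriv (zero_lt_one.trans_le ht1) (half_pos hlam) hv1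
    (fun t ht => (hrange t (ht0.trans ht)).1) (fun t ht => hderiv t (ht0.trans ht))
    (fun t ht => ?_) ε).elim fun t ⟨ht, hεt⟩ => (hlt t ht).not_ge hεt
  have hvt := (hrange t (ht0.trans ht)).1
  have hsmall : 2 * M * (v t + t ^ (-1 / (q:ℝ))) ≤ lam := by
    have := rpow_neg_one_div_le hqR hε ((le_max_right _ _).trans ht)
    have : 2 * M * (2 * ε) = lam := by simp only [ε]; field_simp; ring
    nlinarith [hlt t ht]
  calc lam / 2 * v t / t = lam / 2 * t⁻¹ * v t := by ring
    _ ≤ lam / 2 * t ^ (-(n:ℝ) / q) * v t := by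
        gcongr; exact inv_le_rpow_neg_div hqR (Nat.cast_le.2 hnq) (ht1.trans ht)
    _ ≤ lam * t ^ (-(n:ℝ) / q) * v t + ρ t :=
        half_mul_le_add_of_abs_le (rpow_nonneg (by linarith) _) hvt hsmall (hρ t (ht0.trans ht))

/-- if `λ > 0` and `n ≤ q` the zero solution is unstable: there
exist `ε > 0` and `t1 ≥ t0` such that any admissible solution starting at any
`δ ∈ (0,ε)` at time `t1` eventually reaches the value `ε`. -/
theorem instability_of_zero_linear_case
    (q n : ℕ) (hq : 0 < q) (hn : 0 < n) (hnq : n ≤ q)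
    (lam d0 t0 M : ℝ) (hlam : 0 < lam) (hd0 : 0 < d0) (ht0 : 0 < t0) (hM : 0 < M) :
    ∃ ε > 0, ∃ t1 ≥ t0, ∀ δ ∈ Set.Ioo (0:ℝ) ε,
      ∀ v : ℝ → ℝ, IsAdmissibleLin q n lam d0 t0 M v → v t1 = δ →
        ∃ t ≥ t1, ε ≤ v t :=
  instability_of_zero_linear_case_general q n hq hnq lam d0 t0 M hlam hM
end

section
/- Fix positive integers q and n with n < q, an integer s ≥ 2, real numbers λ > 0, γ < 0, ν > 0, M > 0, z1 > 0 and t1 > 0, and set U_c = (λ/|γ|)^{1/(s−1)}. Suppose z : [t1,∞) → [−z1,z1] is differentiable and satisfies z'(t) = t^{−n/q}·(U_c + z(t))·(λ + γ·(U_c + z(t))^{s−1}) + p(t) for all t ≥ t1, where |p(t)| ≤ M·t^{−n/q}·(t^{−ν} + t^{−1/q}). Then there exist z2 ∈ (0,z1], t2 ≥ t1 and K > 0 such that every such z with |z(t2)| ≤ z2 satisfies z(t)² ≤ K·(t^{−ν} + t^{−1/q}) for all t ≥ t2; in particular z(t) → 0 as t → ∞. -/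
open Real Set Filter Topology

/-!
Near `U_c` the drift contracts: `z · (U_c + z)(λ + γ (U_c + z)^{s-1}) ≤ -c z²` for
`|z| ≤ U_c/2`, by a geometric-sum bound on `(a - b)(a^{s-1} - b^{s-1})`. Compare `z²` with the
barrier `K g(t)`, `g(t) = t^{-ν} + t^{-1/q}`, started at level `δ²` at a late time `t₂`: at a
first contact `z² = K g ≤ δ²`, so `(z²)' ≤ -2c t^{-n/q} K g + 2δM t^{-n/q} g`, which is below
the barrier's slope `≥ -(ν + 1/q) K g / t` once `2δM ≤ cK` and `ν + 1/q < c t^{1-n/q}`; both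
hold for `t₂` large because `g → 0` and `n < q`.
-/

lemma succ_mul_pow_mul_sq_le_sub_mul_pow_sub_pow {a b r : ℝ} (m : ℕ) (hr : 0 ≤ r)
    (ha : r ≤ a) (hb : r ≤ b) :
    (m + 1) * r ^ m * (a - b) ^ 2 ≤ (a - b) * (a ^ (m + 1) - b ^ (m + 1)) := by
  have hsum : (m + 1) * r ^ m ≤ ∑ i ∈ Finset.range (m + 1), a ^ i * b ^ (m - i) := by
    calc (m + 1) * r ^ m = ∑ _i ∈ Finset.range (m + 1), r ^ m := by simp
      _ ≤ _ := Finset.sum_le_sum fun i hi => ?_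
    have hi : i ≤ m := Nat.lt_succ_iff.mp (Finset.mem_range.mp hi)
    have : 0 ≤ a := hr.trans ha
    calc r ^ m = r ^ i * r ^ (m - i) := by rw [← pow_add, Nat.add_sub_cancel' hi]
      _ ≤ a ^ i * b ^ (m - i) := by gcongr
  calc (m + 1) * r ^ m * (a - b) ^ 2
      ≤ (∑ i ∈ Finset.range (m + 1), a ^ i * b ^ (m - i)) * (a - b) ^ 2 := by gcongr
    _ = (a - b) * (a ^ (m + 1) - b ^ (m + 1)) := by
      rw [← geom_sum₂_mul]; simp only [Nat.add_sub_cancel]; ring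

lemma mul_equilibrium_drift_le {lam γ Uc x : ℝ} (m : ℕ) (hγ : γ ≤ 0) (hUc : 0 ≤ Uc)
    (hequil : γ * Uc ^ (m + 1) = -lam) (hx : |x| ≤ Uc / 2) :
    x * ((Uc + x) * (lam + γ * (Uc + x) ^ (m + 1))) ≤
      γ * (m + 1) * (Uc / 2) ^ (m + 1) * x ^ 2 := by
  have hlow : Uc / 2 ≤ Uc + x := by linarith [neg_abs_le x]
  have hgap := succ_mul_pow_mul_sq_le_sub_mul_pow_sub_pow m (by positivity) hlow
    (by linarith : Uc / 2 ≤ Uc)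
  rw [add_sub_cancel_left] at hgap
  calc x * ((Uc + x) * (lam + γ * (Uc + x) ^ (m + 1)))
      = γ * ((Uc + x) * (x * ((Uc + x) ^ (m + 1) - Uc ^ (m + 1)))) := by
        rw [show lam = -(γ * Uc ^ (m + 1)) by linarith]; ring
    _ ≤ γ * (Uc / 2 * ((m + 1) * (Uc / 2) ^ m * x ^ 2)) :=
        mul_le_mul_of_nonpos_left (mul_le_mul hlow hgap (by positivity) (by linarith)) hγ
    _ = γ * (m + 1) * (Uc / 2) ^ (m + 1) * x ^ 2 := by ring

lemma mul_equilibrium_pow_eq_neg {lam γ : ℝ} (m : ℕ) (hlam : 0 ≤ lam) (hγ : γ < 0) :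
    γ * ((lam / |γ|) ^ (1 / (((m + 2 : ℕ) : ℝ) - 1))) ^ (m + 1) = -lam := by
  rw [show 1 / (((m + 2 : ℕ) : ℝ) - 1) = ((m + 1 : ℕ) : ℝ)⁻¹ by push_cast; ring,
    rpow_inv_natCast_pow (by positivity) m.succ_ne_zero, abs_of_neg hγ]
  field_simp [hγ.ne]

theorem le_of_deriv_lt_at_contact {f f' B B' : ℝ → ℝ} {a : ℝ}
    (hf : ∀ x ≥ a, HasDerivAt f (f' x) x) (hB : ∀ x ≥ a, HasDerivAt B (B' x) x)
    (ha : f a ≤ B a) (hcontact : ∀ x ≥ a, f x = B x → f' x < B' x) :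
    ∀ x ≥ a, f x ≤ B x := fun _ hx =>
  image_le_of_deriv_right_lt_deriv_boundary'
    (fun y hy => (hf y hy.1).continuousAt.continuousWithinAt)
    (fun y hy => (hf y hy.1).hasDerivWithinAt) ha
    (fun y hy => (hB y hy.1).continuousAt.continuousWithinAt)
    (fun y hy => (hB y hy.1).hasDerivWithinAt) (fun y hy => hcontact y hy.1) ⟨hx, le_rfl⟩

lemma hasDerivAt_rpow_neg_add_rpow_neg (a b : ℝ) {t : ℝ} (ht : 0 < t) :
    HasDerivAt (fun t => t ^ (-a) + t ^ (-b)) (-(a * t ^ (-a) + b * t ^ (-b)) / t) t := by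
  refine ((hasDerivAt_rpow_const (p := -a) (Or.inl ht.ne')).add
    (hasDerivAt_rpow_const (p := -b) (Or.inl ht.ne'))).congr_deriv ?_
  rw [rpow_sub_one ht.ne', rpow_sub_one ht.ne']
  ring

lemma tendsto_rpow_neg_add_rpow_neg {a b : ℝ} (ha : 0 < a) (hb : 0 < b) :
    Tendsto (fun t : ℝ => t ^ (-a) + t ^ (-b)) atTop (𝓝 0) := by
  simpa using (tendsto_rpow_neg_atTop ha).add (tendsto_rpow_neg_atTop hb)

lemma tendsto_zero_of_sq_le {α : Type*} {l : Filter α} {f g : α → ℝ}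
    (hfg : ∀ᶠ x in l, f x ^ 2 ≤ g x) (hg : Tendsto g l (𝓝 0)) : Tendsto f l (𝓝 0) :=
  squeeze_zero_norm' (hfg.mono fun _ h => abs_le_sqrt h) (by simpa using hg.sqrt)

theorem sq_le_mul_rpow_neg_add_rpow_neg {z p F : ℝ → ℝ} {κ a b c δ M K t₀ : ℝ}
    (ht₀ : 0 < t₀) (hκ : κ ≤ 1) (ha : 0 ≤ a) (hb : 0 ≤ b) (hδ : 0 ≤ δ) (hK : 0 < K)
    (hz : ∀ t ≥ t₀, HasDerivAt z (t ^ (-κ) * F t + p t) t)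
    (hF : ∀ t ≥ t₀, |z t| ≤ δ → z t * F t ≤ -(c * z t ^ 2))
    (hp : ∀ t ≥ t₀, |p t| ≤ M * t ^ (-κ) * (t ^ (-a) + t ^ (-b)))
    (hKδ : K * (t₀ ^ (-a) + t₀ ^ (-b)) ≤ δ ^ 2) (hMδ : 2 * δ * M ≤ c * K)
    (hslow : a + b < c * t₀ ^ (1 - κ)) (hz₀ : z t₀ ^ 2 ≤ K * (t₀ ^ (-a) + t₀ ^ (-b))) :
    ∀ t ≥ t₀, z t ^ 2 ≤ K * (t ^ (-a) + t ^ (-b)) := by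
  refine le_of_deriv_lt_at_contact (fun t ht => by simpa using (hz t ht).fun_pow 2)
    (fun t ht => (hasDerivAt_rpow_neg_add_rpow_neg a b (ht₀.trans_le ht)).const_mul K) hz₀ ?_
  intro x hx hcontact
  have hx0 : 0 < x := ht₀.trans_le hx
  set g := x ^ (-a) + x ^ (-b) with hg
  set e := x ^ (-κ)
  have he : 0 < e := rpow_pos_of_pos hx0 _
  have hg0 : 0 < g := add_pos (rpow_pos_of_pos hx0 _) (rpow_pos_of_pos hx0 _)
  have hzδ : |z x| ≤ δ := by
    refine abs_le_of_sq_le_sq (hcontact.trans_le (hKδ.trans' ?_)) hδ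
    exact mul_le_mul_of_nonneg_left (add_le_add (rpow_le_rpow_of_nonpos ht₀ hx (by linarith))
      (rpow_le_rpow_of_nonpos ht₀ hx (by linarith))) hK.le
  have hzp : z x * p x ≤ δ * (M * e * g) := (le_abs_self _).trans <|
    (abs_mul _ _).trans_le (mul_le_mul hzδ (hp x hx) (abs_nonneg _) hδ)
  have hc : 0 < c := by
    have : 0 < c * t₀ ^ (1 - κ) := by linarith
    exact pos_of_mul_pos_left this (rpow_pos_of_pos ht₀ _).le
  have hxe : a + b < c * (x * e) := by
    calc a + b < c * t₀ ^ (1 - κ) := hslow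
      _ ≤ c * x ^ (1 - κ) := by gcongr
      _ = c * (x * e) := by rw [sub_eq_add_neg, rpow_add hx0, rpow_one]
  have hrate : a * x ^ (-a) + b * x ^ (-b) ≤ (a + b) * g := by
    have := rpow_pos_of_pos hx0 (-a); have := rpow_pos_of_pos hx0 (-b)
    rw [hg]; nlinarith
  calc 2 * z x * (e * F x + p x) = 2 * e * (z x * F x) + 2 * (z x * p x) := by ring
    _ ≤ 2 * e * (-(c * (K * g))) + 2 * (δ * (M * e * g)) := by
        rw [← hcontact]; gcongr; exact hF x hx hzδ
    _ ≤ -(c * K * e * g) := by nlinarith [mul_le_mul_of_nonneg_left hMδ (mul_pos he hg0).le]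
    _ < -(K * ((a + b) * g)) / x := by
        rw [neg_div, neg_lt_neg_iff, div_lt_iff₀ hx0]
        nlinarith [mul_lt_mul_of_pos_left hxe (mul_pos hK hg0)]
    _ ≤ K * (-(a * x ^ (-a) + b * x ^ (-b)) / x) := by
        rw [← mul_div_assoc, mul_neg, neg_div, neg_div, neg_le_neg_iff]
        gcongr

theorem perturbed_equilibrium_stability_general
    (q n s : ℕ) (hq : 0 < q) (hnq : n < q) (hs : 2 ≤ s)
    (lam γ ν M z1 t1 : ℝ) (hlam : 0 < lam) (hγ : γ < 0) (hν : 0 < ν)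
    (hz1 : 0 < z1) :
    ∀ Uc : ℝ, Uc = (lam / |γ|) ^ (1 / ((s:ℝ) - 1)) →
    ∃ z2 ∈ Set.Ioc (0:ℝ) z1, ∃ t2 ≥ t1, ∃ K > 0,
      ∀ z p : ℝ → ℝ,
        (∀ t ≥ t1, z t ∈ Set.Icc (-z1) z1) →
        (∀ t ≥ t1, |p t| ≤ M * t ^ (-(n:ℝ)/(q:ℝ)) * (t ^ (-ν) + t ^ (-(1:ℝ)/(q:ℝ)))) →
        (∀ t ≥ t1, HasDerivAt z
          (t ^ (-(n:ℝ)/(q:ℝ)) * (Uc + z t) * (lam + γ * (Uc + z t) ^ (s - 1)) + p t) t) →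
        |z t2| ≤ z2 →
        (∀ t ≥ t2, (z t) ^ 2 ≤ K * (t ^ (-ν) + t ^ (-(1:ℝ)/(q:ℝ)))) ∧
        Filter.Tendsto z Filter.atTop (nhds 0) := by
  intro Uc hUc
  obtain ⟨m, rfl⟩ : ∃ m, s = m + 2 := ⟨s - 2, by omega⟩
  have hequil : γ * Uc ^ (m + 1) = -lam := hUc ▸ mul_equilibrium_pow_eq_neg m hlam.le hγ
  have hUc_pos : 0 < Uc := hUc ▸ rpow_pos_of_pos (div_pos hlam (abs_pos.2 hγ.ne)) _
  simp only [show m + 2 - 1 = m + 1 from rfl, neg_div]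
  set κ : ℝ := n / q
  set b : ℝ := 1 / q
  have hκ : κ < 1 := (div_lt_one (by positivity)).2 (by exact_mod_cast hnq)
  have hb : 0 < b := by positivity
  set c := -γ * (m + 1) * (Uc / 2) ^ (m + 1) with hc_def
  have hc : 0 < c := by have := neg_pos.2 hγ; positivity
  set δ := min (Uc / 2) z1
  have hδ : 0 < δ := lt_min (by positivity) hz1
  have hg := tendsto_rpow_neg_add_rpow_neg hν hb
  obtain ⟨t2, ht2, ht2_pos, hslow, hsmall⟩ := ((eventually_ge_atTop t1).and
    ((eventually_gt_atTop 0).and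
    ((((tendsto_rpow_atTop (sub_pos.2 hκ)).const_mul_atTop hc).eventually_gt_atTop (ν + b)).and
    ((hg.const_mul (2 * M)).eventually_le_const (by rw [mul_zero]; positivity :
      2 * M * 0 < c * δ))))).exists
  have hg2 : 0 < t2 ^ (-ν) + t2 ^ (-b) :=
    add_pos (rpow_pos_of_pos ht2_pos _) (rpow_pos_of_pos ht2_pos _)
  set K := δ ^ 2 / (t2 ^ (-ν) + t2 ^ (-b))
  have hKg2 : K * (t2 ^ (-ν) + t2 ^ (-b)) = δ ^ 2 := div_mul_cancel₀ _ hg2.ne'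
  refine ⟨δ, ⟨hδ, min_le_right _ _⟩, t2, ht2, K, by positivity, fun z p _ hp hz hz2 => ?_⟩
  have hbound := sq_le_mul_rpow_neg_add_rpow_neg ht2_pos hκ.le hν.le hb.le hδ.le (by positivity)
    (F := fun t => (Uc + z t) * (lam + γ * (Uc + z t) ^ (m + 1)))
    (fun t ht => by simpa only [mul_assoc] using hz t (ht2.trans ht))
    (fun t _ hzt => (mul_equilibrium_drift_le m hγ.le hUc_pos.le hequil
      (hzt.trans (min_le_left _ _))).trans_eq (by rw [hc_def]; ring))
    (fun t ht => hp t (ht2.trans ht)) hKg2.le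
    (le_of_mul_le_mul_right (by rw [mul_assoc c, hKg2]; nlinarith) hg2)
    hslow (hKg2 ▸ (sq_abs _).symm.trans_le (pow_le_pow_left₀ (abs_nonneg _) hz2 2))
  exact ⟨hbound, tendsto_zero_of_sq_le ((eventually_ge_atTop t2).mono hbound)
    (by simpa using hg.const_mul K)⟩

/-- stability of the equilibrium `U_c = (λ/|γ|)^{1/(s−1)}` of the
scaled equation `z' = t^{−n/q}(U_c+z)(λ+γ(U_c+z)^{s−1}) + p(t)` with respect to
the decaying perturbation `p`, with the quantitative bound
`z(t)² ≤ K(t^{−ν} + t^{−1/q})`; in particular `z(t) → 0`. -/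
theorem perturbed_equilibrium_stability
    (q n s : ℕ) (hq : 0 < q) (hn : 0 < n) (hnq : n < q) (hs : 2 ≤ s)
    (lam γ ν M z1 t1 : ℝ) (hlam : 0 < lam) (hγ : γ < 0) (hν : 0 < ν)
    (hM : 0 < M) (hz1 : 0 < z1) (ht1 : 0 < t1) :
    ∀ Uc : ℝ, Uc = (lam / |γ|) ^ (1 / ((s:ℝ) - 1)) →
    ∃ z2 ∈ Set.Ioc (0:ℝ) z1, ∃ t2 ≥ t1, ∃ K > 0,
      ∀ z p : ℝ → ℝ,
        (∀ t ≥ t1, z t ∈ Set.Icc (-z1) z1) →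
        (∀ t ≥ t1, |p t| ≤ M * t ^ (-(n:ℝ)/(q:ℝ)) * (t ^ (-ν) + t ^ (-(1:ℝ)/(q:ℝ)))) →
        (∀ t ≥ t1, HasDerivAt z
          (t ^ (-(n:ℝ)/(q:ℝ)) * (Uc + z t) * (lam + γ * (Uc + z t) ^ (s - 1)) + p t) t) →
        |z t2| ≤ z2 →
        (∀ t ≥ t2, (z t) ^ 2 ≤ K * (t ^ (-ν) + t ^ (-(1:ℝ)/(q:ℝ)))) ∧
        Filter.Tendsto z Filter.atTop (nhds 0) :=
  perturbed_equilibrium_stability_general q n s hq hnq hs lam γ ν M z1 t1 hlam hγ hν hz1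
end

section
/- Let γ ≠ 0, 0 < κ ≤ 1 and t0 > 0, and consider the equation x''(t) + x(t) = γ·t^{−κ}·x'(t) for t ≥ t0. If γ < 0, then every twice-differentiable solution x : [t0,∞) → ℝ satisfies x(t) → 0 and x'(t) → 0 as t → ∞ (the equilibrium is asymptotically stable). If γ > 0, then every solution with (x(t0),x'(t0)) ≠ (0,0) satisfies x(t)² + x'(t)² → ∞ as t → ∞ (the equilibrium is unstable). -/
/-!
The energy `E = x² + x'²` satisfies `E' = 2γ t^{-κ} x'²`, which is not comparable with `E` because
`x'` vanishes twice per oscillation. The corrected energy `V = E - γ t^{-κ} x x'` has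
`V' = γ t^{-κ} E + (γκ t^{-κ-1} - γ² t^{-2κ}) x x'`, whose second term is at most a quarter of the
first once `t` is large. Then `|V - E| ≤ E / 8` and `V'` lies on the same side of
`(2/3) γ t^{-κ} V` as `γ`, so an integrating factor bounds `V`, hence `E`, above (`γ < 0`) or below
(`γ > 0`) by a multiple of `exp ((2/3) γ P t)`, where `P' = t^{-κ}` and `P → ∞` because `κ ≤ 1`.
-/

open Real Filter Set Topology

section IntegratingFactor

variable {f f' P p : ℝ → ℝ} {T c : ℝ}

theorem antitoneOn_mul_exp_of_deriv_le (hf : ∀ t ∈ Ici T, HasDerivAt f (f' t) t)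
    (hP : ∀ t ∈ Ici T, HasDerivAt P (p t) t) (h : ∀ t ∈ Ioi T, f' t ≤ c * p t * f t) :
    AntitoneOn (fun t => f t * exp (-c * P t)) (Ici T) := by
  have hg : ∀ t ∈ Ici T, HasDerivAt (fun t => f t * exp (-c * P t))
      ((f' t - c * p t * f t) * exp (-c * P t)) t := fun t ht =>
    ((hf t ht).mul ((hP t ht).const_mul (-c)).exp).congr_deriv (by ring)
  refine antitoneOn_of_hasDerivWithinAt_nonpos
    (f' := fun t => (f' t - c * p t * f t) * exp (-c * P t)) (convex_Ici T)
    (fun t ht => (hg t ht).continuousAt.continuousWithinAt) (fun t ht => ?_) (fun t ht => ?_)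
  all_goals rw [interior_Ici] at ht
  · exact (hg t (Ioi_subset_Ici_self ht)).hasDerivWithinAt
  · exact mul_nonpos_of_nonpos_of_nonneg (sub_nonpos.2 (h t ht)) (exp_pos _).le

theorem le_mul_exp_of_deriv_le (hf : ∀ t ∈ Ici T, HasDerivAt f (f' t) t)
    (hP : ∀ t ∈ Ici T, HasDerivAt P (p t) t) (h : ∀ t ∈ Ioi T, f' t ≤ c * p t * f t)
    {t : ℝ} (ht : T ≤ t) : f t ≤ f T * exp (c * (P t - P T)) := by
  have hanti : f t * exp (-c * P t) ≤ f T * exp (-c * P T) :=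
    antitoneOn_mul_exp_of_deriv_le hf hP h self_mem_Ici ht ht
  calc f t = f t * exp (-c * P t) * exp (c * P t) := by
        rw [mul_assoc, ← exp_add, neg_mul, neg_add_cancel, exp_zero, mul_one]
    _ ≤ f T * exp (-c * P T) * exp (c * P t) := by gcongr
    _ = f T * exp (c * (P t - P T)) := by rw [mul_assoc, ← exp_add]; congr 2; ring

theorem mul_exp_le_of_le_deriv (hf : ∀ t ∈ Ici T, HasDerivAt f (f' t) t)
    (hP : ∀ t ∈ Ici T, HasDerivAt P (p t) t) (h : ∀ t ∈ Ioi T, c * p t * f t ≤ f' t)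
    {t : ℝ} (ht : T ≤ t) : f T * exp (c * (P t - P T)) ≤ f t := by
  have := le_mul_exp_of_deriv_le (f := -f) (fun t ht => (hf t ht).neg) hP
    (fun t ht => by simpa using h t ht) ht
  simpa using this

end IntegratingFactor

theorem exists_hasDerivAt_rpow_neg_tendsto_atTop {κ : ℝ} (hκ : κ ≤ 1) :
    ∃ P : ℝ → ℝ, (∀ t, 0 < t → HasDerivAt P (t ^ (-κ)) t) ∧ Tendsto P atTop atTop := by
  rcases hκ.eq_or_lt with rfl | hκ
  · refine ⟨log, fun t ht => ?_, tendsto_log_atTop⟩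
    simpa [rpow_neg_one] using hasDerivAt_log ht.ne'
  · have hκ' : (0 : ℝ) < 1 - κ := sub_pos.2 hκ
    refine ⟨fun t => t ^ (1 - κ) / (1 - κ), fun t ht => ?_,
      (tendsto_rpow_atTop hκ').atTop_div_const hκ'⟩
    have h := (hasDerivAt_rpow_const (p := 1 - κ) (Or.inl ht.ne')).div_const (1 - κ)
    rwa [sub_sub_cancel_left, mul_div_cancel_left₀ _ hκ'.ne'] at h

theorem eventually_abs_mul_rpow_neg_le (γ : ℝ) {κ : ℝ} (hκ : 0 < κ) :
    ∀ᶠ t in atTop, |γ| * t ^ (-κ) ≤ 1 / 4 := by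
  have := (tendsto_rpow_neg_atTop hκ).const_mul |γ|
  rw [mul_zero] at this
  exact this.eventually (ge_mem_nhds (by norm_num))

theorem abs_mul_le_half_sq_add_sq (u v : ℝ) : |u * v| ≤ (u ^ 2 + v ^ 2) / 2 := by
  rw [abs_le]
  constructor <;> nlinarith [sq_nonneg (u - v), sq_nonneg (u + v)]

theorem tendsto_zero_of_sq_add_sq_tendsto_zero {α : Type*} {l : Filter α} {f g : α → ℝ}
    (h : Tendsto (fun a => f a ^ 2 + g a ^ 2) l (𝓝 0)) : Tendsto f l (𝓝 0) := by
  have hsq : Tendsto (fun a => f a ^ 2) l (𝓝 0) :=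
    squeeze_zero (fun a => sq_nonneg _) (fun a => le_add_of_nonneg_right (sq_nonneg _)) h
  refine (tendsto_zero_iff_abs_tendsto_zero f).2 ?_
  simpa only [Function.comp_def, sqrt_sq_eq_abs, sqrt_zero] using hsq.sqrt

/-- With `a = γ t^{-κ}`, `ρ` the coefficient of `x x'` in `V'` and `(u, v) = (x, x')`, this is
`γ (V' - (2/3) a V) ≥ 0`; it is sharp, the cross terms costing exactly `a² (u² + v²) / 3`. -/
theorem zero_le_mul_sub_two_thirds_of_abs_le {a ρ u v : ℝ} (ha : |a| ≤ 1 / 4)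
    (hρ : |ρ| ≤ |a| / 2) :
    0 ≤ a * (a * (u ^ 2 + v ^ 2) + ρ * (u * v) - 2 / 3 * a * (u ^ 2 + v ^ 2 - a * (u * v))) := by
  have hcoef : |a * ρ + 2 / 3 * a ^ 3| ≤ 2 / 3 * a ^ 2 :=
    calc |a * ρ + 2 / 3 * a ^ 3| ≤ |a| * |ρ| + 2 / 3 * (|a| * |a| ^ 2) := by
          refine (abs_add_le _ _).trans_eq ?_
          rw [abs_mul, abs_mul, abs_pow, abs_of_pos (by norm_num : (0 : ℝ) < 2 / 3)]
          ring
      _ ≤ |a| * (|a| / 2) + 2 / 3 * (1 / 4 * |a| ^ 2) := by gcongr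
      _ = 2 / 3 * a ^ 2 := by rw [← sq_abs a]; ring
  have hprod :
      |(a * ρ + 2 / 3 * a ^ 3) * (u * v)| ≤ 2 / 3 * a ^ 2 * ((u ^ 2 + v ^ 2) / 2) := by
    rw [abs_mul]
    gcongr
    exact abs_mul_le_half_sq_add_sq u v
  have hexpand : a * (a * (u ^ 2 + v ^ 2) + ρ * (u * v) - 2 / 3 * a * (u ^ 2 + v ^ 2 - a * (u * v)))
      = a ^ 2 * (u ^ 2 + v ^ 2) / 3 + (a * ρ + 2 / 3 * a ^ 3) * (u * v) := by ring
  rw [hexpand]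
  linarith [neg_le_of_abs_le hprod]

namespace DampedOscillator

variable (γ κ : ℝ) (x : ℝ → ℝ)

noncomputable def energy (t : ℝ) : ℝ := x t ^ 2 + deriv x t ^ 2

noncomputable def modifiedEnergy (t : ℝ) : ℝ := energy x t - γ * t ^ (-κ) * (x t * deriv x t)

noncomputable def modifiedEnergyDeriv (t : ℝ) : ℝ :=
  γ * t ^ (-κ) * energy x t + (γ * κ * t ^ (-κ - 1) - (γ * t ^ (-κ)) ^ 2) * (x t * deriv x t)

variable {γ κ x} {t t0 : ℝ}

theorem hasDerivAt_energy (hx : HasDerivAt x (deriv x t) t)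
    (hxx : HasDerivAt (deriv x) (γ * t ^ (-κ) * deriv x t - x t) t) :
    HasDerivAt (energy x) (2 * γ * t ^ (-κ) * deriv x t ^ 2) t :=
  ((hx.fun_pow 2).fun_add (hxx.fun_pow 2)).congr_deriv (by ring)

theorem hasDerivAt_modifiedEnergy (ht : 0 < t) (hx : HasDerivAt x (deriv x t) t)
    (hxx : HasDerivAt (deriv x) (γ * t ^ (-κ) * deriv x t - x t) t) :
    HasDerivAt (modifiedEnergy γ κ x) (modifiedEnergyDeriv γ κ x t) t := by
  have hpow : HasDerivAt (fun s : ℝ => s ^ (-κ)) (-κ * t ^ (-κ - 1)) t :=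
    hasDerivAt_rpow_const (Or.inl ht.ne')
  refine ((hasDerivAt_energy hx hxx).fun_sub
    ((hpow.const_mul γ).fun_mul (hx.fun_mul hxx))).congr_deriv ?_
  simp only [modifiedEnergyDeriv, energy]
  ring

theorem abs_modifiedEnergy_sub_energy_le (ht : 0 ≤ t) (hsmall : |γ| * t ^ (-κ) ≤ 1 / 4) :
    |modifiedEnergy γ κ x t - energy x t| ≤ energy x t / 8 := by
  have hcross := abs_mul_le_half_sq_add_sq (x t) (deriv x t)
  calc |modifiedEnergy γ κ x t - energy x t|
      = |γ| * t ^ (-κ) * |x t * deriv x t| := by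
        rw [modifiedEnergy, sub_sub_cancel_left, abs_neg, abs_mul, abs_mul,
          abs_of_nonneg (rpow_nonneg ht _)]
    _ ≤ 1 / 4 * ((x t ^ 2 + deriv x t ^ 2) / 2) := by gcongr
    _ = energy x t / 8 := by rw [energy]; ring

theorem abs_mul_rpow_neg_sub_one_sub_sq_le (hκ0 : 0 ≤ κ) (hκ1 : κ ≤ 1) (ht : 4 ≤ t)
    (hsmall : |γ| * t ^ (-κ) ≤ 1 / 4) :
    |γ * κ * t ^ (-κ - 1) - (γ * t ^ (-κ)) ^ 2| ≤ |γ * t ^ (-κ)| / 2 := by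
  have ht0 : 0 < t := by linarith
  have hs : 0 ≤ t ^ (-κ) := rpow_nonneg ht0.le _
  have hfirst : |γ * κ * t ^ (-κ - 1)| ≤ |γ| * t ^ (-κ) / 4 := by
    rw [rpow_sub_one ht0.ne', abs_mul, abs_mul, abs_of_nonneg hκ0,
      abs_of_nonneg (div_nonneg hs ht0.le)]
    calc |γ| * κ * (t ^ (-κ) / t) ≤ |γ| * 1 * (t ^ (-κ) / 4) := by gcongr
      _ = |γ| * t ^ (-κ) / 4 := by ring
  have hsecond : (γ * t ^ (-κ)) ^ 2 ≤ |γ| * t ^ (-κ) / 4 := by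
    rw [← sq_abs, abs_mul, abs_of_nonneg hs, sq]
    nlinarith [mul_nonneg (abs_nonneg γ) hs]
  rw [abs_mul, abs_of_nonneg hs]
  calc |γ * κ * t ^ (-κ - 1) - (γ * t ^ (-κ)) ^ 2|
      ≤ |γ * κ * t ^ (-κ - 1)| + |(γ * t ^ (-κ)) ^ 2| := abs_sub _ _
    _ ≤ |γ| * t ^ (-κ) / 4 + |γ| * t ^ (-κ) / 4 := by
        rw [abs_of_nonneg (sq_nonneg (γ * t ^ (-κ)))]; gcongr
    _ = |γ| * t ^ (-κ) / 2 := by ring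

theorem zero_le_mul_modifiedEnergyDeriv_sub (hκ0 : 0 ≤ κ) (hκ1 : κ ≤ 1) (ht : 4 ≤ t)
    (hsmall : |γ| * t ^ (-κ) ≤ 1 / 4) :
    0 ≤ γ * (modifiedEnergyDeriv γ κ x t - 2 / 3 * γ * t ^ (-κ) * modifiedEnergy γ κ x t) := by
  have hs : 0 < t ^ (-κ) := rpow_pos_of_pos (by linarith) _
  have ha : |γ * t ^ (-κ)| ≤ 1 / 4 := by rwa [abs_mul, abs_of_pos hs]
  have key := zero_le_mul_sub_two_thirds_of_abs_le (u := x t) (v := deriv x t) ha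
    (abs_mul_rpow_neg_sub_one_sub_sq_le hκ0 hκ1 ht hsmall)
  rw [mul_assoc γ] at key
  refine nonneg_of_mul_nonneg_right ?_ hs
  simp only [modifiedEnergyDeriv, modifiedEnergy, energy]
  linarith

theorem modifiedEnergy_le_mul_exp (hγ : γ < 0) (hκ0 : 0 ≤ κ) (hκ1 : κ ≤ 1) {T : ℝ}
    {P : ℝ → ℝ} (hP : ∀ t, 0 < t → HasDerivAt P (t ^ (-κ)) t)
    (hT : ∀ t ≥ T, t0 ≤ t ∧ 4 ≤ t ∧ |γ| * t ^ (-κ) ≤ 1 / 4)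
    (hx : ∀ t ≥ t0, HasDerivAt x (deriv x t) t)
    (hxx : ∀ t ≥ t0, HasDerivAt (deriv x) (γ * t ^ (-κ) * deriv x t - x t) t) (ht : T ≤ t) :
    modifiedEnergy γ κ x t ≤ modifiedEnergy γ κ x T * exp (2 / 3 * γ * (P t - P T)) := by
  refine le_mul_exp_of_deriv_le (f' := modifiedEnergyDeriv γ κ x) (fun s hs => ?_)
    (fun s hs => hP s (by linarith [hT s hs])) (fun s hs => ?_) ht
  · obtain ⟨hs0, hs4, -⟩ := hT s hs
    exact hasDerivAt_modifiedEnergy (by linarith) (hx s hs0) (hxx s hs0)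
  · obtain ⟨-, hs4, hsmall⟩ := hT s (le_of_lt hs)
    exact sub_nonpos.1 (nonpos_of_mul_nonneg_right
      (zero_le_mul_modifiedEnergyDeriv_sub hκ0 hκ1 hs4 hsmall) hγ)

theorem mul_exp_le_modifiedEnergy (hγ : 0 < γ) (hκ0 : 0 ≤ κ) (hκ1 : κ ≤ 1) {T : ℝ}
    {P : ℝ → ℝ} (hP : ∀ t, 0 < t → HasDerivAt P (t ^ (-κ)) t)
    (hT : ∀ t ≥ T, t0 ≤ t ∧ 4 ≤ t ∧ |γ| * t ^ (-κ) ≤ 1 / 4)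
    (hx : ∀ t ≥ t0, HasDerivAt x (deriv x t) t)
    (hxx : ∀ t ≥ t0, HasDerivAt (deriv x) (γ * t ^ (-κ) * deriv x t - x t) t) (ht : T ≤ t) :
    modifiedEnergy γ κ x T * exp (2 / 3 * γ * (P t - P T)) ≤ modifiedEnergy γ κ x t := by
  refine mul_exp_le_of_le_deriv (f' := modifiedEnergyDeriv γ κ x) (fun s hs => ?_)
    (fun s hs => hP s (by linarith [hT s hs])) (fun s hs => ?_) ht
  · obtain ⟨hs0, hs4, -⟩ := hT s hs
    exact hasDerivAt_modifiedEnergy (by linarith) (hx s hs0) (hxx s hs0)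
  · obtain ⟨-, hs4, hsmall⟩ := hT s (le_of_lt hs)
    exact sub_nonneg.1 (nonneg_of_mul_nonneg_right
      (zero_le_mul_modifiedEnergyDeriv_sub hκ0 hκ1 hs4 hsmall) hγ)

theorem energy_le_energy (hγ : 0 ≤ γ) (ht0 : 0 < t0)
    (hx : ∀ t ≥ t0, HasDerivAt x (deriv x t) t)
    (hxx : ∀ t ≥ t0, HasDerivAt (deriv x) (γ * t ^ (-κ) * deriv x t - x t) t) (ht : t0 ≤ t) :
    energy x t0 ≤ energy x t := by
  refine monotoneOn_of_hasDerivWithinAt_nonneg (convex_Ici t0)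
    (f' := fun s => 2 * γ * s ^ (-κ) * deriv x s ^ 2)
    (fun s hs => (hasDerivAt_energy (hx s hs) (hxx s hs)).continuousAt.continuousWithinAt)
    (fun s hs => ?_) (fun s hs => ?_) self_mem_Ici ht ht
  all_goals rw [interior_Ici] at hs
  · exact (hasDerivAt_energy (hx s hs.le) (hxx s hs.le)).hasDerivWithinAt
  · have : 0 ≤ s ^ (-κ) := rpow_nonneg (ht0.trans hs).le _
    positivity

theorem energy_pos (h0 : (x t, deriv x t) ≠ (0, 0)) : 0 < energy x t := by
  have : x t ≠ 0 ∨ deriv x t ≠ 0 := by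
    contrapose! h0
    rw [h0.1, h0.2]
  rcases this with h | h <;> unfold energy <;> positivity

theorem tendsto_energy_nhds_zero (hγ : γ < 0) (hκ0 : 0 < κ) (hκ1 : κ ≤ 1)
    (hx : ∀ t ≥ t0, HasDerivAt x (deriv x t) t)
    (hxx : ∀ t ≥ t0, HasDerivAt (deriv x) (γ * t ^ (-κ) * deriv x t - x t) t) :
    Tendsto (energy x) atTop (𝓝 0) := by
  obtain ⟨P, hP, hPtop⟩ := exists_hasDerivAt_rpow_neg_tendsto_atTop hκ1
  obtain ⟨T, hT⟩ := ((eventually_ge_atTop t0).and ((eventually_ge_atTop 4).and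
    (eventually_abs_mul_rpow_neg_le γ hκ0))).exists_forall_of_atTop
  have hbound : ∀ t ≥ T,
      energy x t ≤ 8 / 7 * (modifiedEnergy γ κ x T * exp (2 / 3 * γ * (P t - P T))) := by
    intro t ht
    obtain ⟨-, ht4, hsmall⟩ := hT t ht
    have hclose := abs_le.1 (abs_modifiedEnergy_sub_energy_le (x := x) (by linarith) hsmall)
    have := modifiedEnergy_le_mul_exp hγ hκ0.le hκ1 hP hT hx hxx ht
    linarith
  have hexp : Tendsto (fun t => exp (2 / 3 * γ * (P t - P T))) atTop (𝓝 0) := by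
    simp_rw [sub_eq_add_neg]
    exact tendsto_exp_atBot.comp
      ((tendsto_atTop_add_const_right _ _ hPtop).const_mul_atTop_of_neg (by linarith))
  have hlim := (hexp.const_mul (modifiedEnergy γ κ x T)).const_mul (8 / 7)
  rw [mul_zero, mul_zero] at hlim
  exact tendsto_of_tendsto_of_tendsto_of_le_of_le' tendsto_const_nhds hlim
    (Eventually.of_forall fun t => by unfold energy; positivity)
    (eventually_atTop.2 ⟨T, hbound⟩)

theorem tendsto_energy_atTop (hγ : 0 < γ) (hκ0 : 0 < κ) (hκ1 : κ ≤ 1) (ht0 : 0 < t0)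
    (hx : ∀ t ≥ t0, HasDerivAt x (deriv x t) t)
    (hxx : ∀ t ≥ t0, HasDerivAt (deriv x) (γ * t ^ (-κ) * deriv x t - x t) t)
    (h0 : (x t0, deriv x t0) ≠ (0, 0)) :
    Tendsto (energy x) atTop atTop := by
  obtain ⟨P, hP, hPtop⟩ := exists_hasDerivAt_rpow_neg_tendsto_atTop hκ1
  obtain ⟨T, hT⟩ := ((eventually_ge_atTop t0).and ((eventually_ge_atTop 4).and
    (eventually_abs_mul_rpow_neg_le γ hκ0))).exists_forall_of_atTop
  have hclose : ∀ t ≥ T, |modifiedEnergy γ κ x t - energy x t| ≤ energy x t / 8 :=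
    fun t ht => abs_modifiedEnergy_sub_energy_le (by linarith [hT t ht]) (hT t ht).2.2
  have hVT : 0 < modifiedEnergy γ κ x T := by
    have hE := (energy_pos h0).trans_le (energy_le_energy hγ.le ht0 hx hxx (hT T le_rfl).1)
    linarith [abs_le.1 (hclose T le_rfl)]
  have hbound : ∀ t ≥ T,
      8 / 9 * (modifiedEnergy γ κ x T * exp (2 / 3 * γ * (P t - P T))) ≤ energy x t := by
    intro t ht
    have := mul_exp_le_modifiedEnergy hγ hκ0.le hκ1 hP hT hx hxx ht
    linarith [abs_le.1 (hclose t ht)]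
  have hexp : Tendsto (fun t => exp (2 / 3 * γ * (P t - P T))) atTop atTop := by
    simp_rw [sub_eq_add_neg]
    exact tendsto_exp_atTop.comp
      ((tendsto_atTop_add_const_right _ _ hPtop).const_mul_atTop (by linarith))
  exact tendsto_atTop_mono' atTop (eventually_atTop.2 ⟨T, hbound⟩)
    ((hexp.const_mul_atTop hVT).const_mul_atTop (by norm_num))

end DampedOscillator

theorem decaying_damping_oscillator_general
    (γ κ t0 : ℝ) (hκ0 : 0 < κ) (hκ1 : κ ≤ 1) (ht0 : 0 < t0) :
    (γ < 0 → ∀ x : ℝ → ℝ,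
      (∀ t ≥ t0, HasDerivAt x (deriv x t) t) →
      (∀ t ≥ t0, HasDerivAt (deriv x) (γ * t ^ (-κ) * deriv x t - x t) t) →
      Filter.Tendsto x Filter.atTop (nhds 0) ∧
      Filter.Tendsto (deriv x) Filter.atTop (nhds 0)) ∧
    (0 < γ → ∀ x : ℝ → ℝ,
      (∀ t ≥ t0, HasDerivAt x (deriv x t) t) →
      (∀ t ≥ t0, HasDerivAt (deriv x) (γ * t ^ (-κ) * deriv x t - x t) t) →
      (x t0, deriv x t0) ≠ (0, 0) →
      Filter.Tendsto (fun t => (x t) ^ 2 + (deriv x t) ^ 2) Filter.atTop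
        Filter.atTop) := by
  refine ⟨fun hγ x hx hxx => ?_, fun hγ x hx hxx h0 =>
    DampedOscillator.tendsto_energy_atTop hγ hκ0 hκ1 ht0 hx hxx h0⟩
  have hE : Tendsto (fun t => x t ^ 2 + deriv x t ^ 2) atTop (𝓝 0) :=
    DampedOscillator.tendsto_energy_nhds_zero hγ hκ0 hκ1 hx hxx
  refine ⟨tendsto_zero_of_sq_add_sq_tendsto_zero hE,
    tendsto_zero_of_sq_add_sq_tendsto_zero (g := x) ?_⟩
  simpa only [add_comm] using hE

/-- for the oscillator `x'' + x = γ t^{−κ} x'` with `0 < κ ≤ 1`: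
if `γ < 0` every solution tends to the equilibrium `(0,0)`, while if `γ > 0`
every nontrivial solution satisfies `x(t)² + x'(t)² → ∞`. -/
theorem decaying_damping_oscillator
    (γ κ t0 : ℝ) (hγ : γ ≠ 0) (hκ0 : 0 < κ) (hκ1 : κ ≤ 1) (ht0 : 0 < t0) :
    (γ < 0 → ∀ x : ℝ → ℝ,
      (∀ t ≥ t0, HasDerivAt x (deriv x t) t) →
      (∀ t ≥ t0, HasDerivAt (deriv x) (γ * t ^ (-κ) * deriv x t - x t) t) →
      Filter.Tendsto x Filter.atTop (nhds 0) ∧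
      Filter.Tendsto (deriv x) Filter.atTop (nhds 0)) ∧
    (0 < γ → ∀ x : ℝ → ℝ,
      (∀ t ≥ t0, HasDerivAt x (deriv x t) t) →
      (∀ t ≥ t0, HasDerivAt (deriv x) (γ * t ^ (-κ) * deriv x t - x t) t) →
      (x t0, deriv x t0) ≠ (0, 0) →
      Filter.Tendsto (fun t => (x t) ^ 2 + (deriv x t) ^ 2) Filter.atTop
        Filter.atTop) :=
  decaying_damping_oscillator_general γ κ t0 hκ0 hκ1 ht0
end
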